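/- arXiv:cs/0111038 — 4 statements merged into one kernel-verified Lean document; each statement's English description precedes it below -/
import Mathlib

section
/- In a fair valuation structure, if α is an absorbing element and β ≽ α, then α ⊕ β = β and β ⊖ α = β. -/
structure FairVS (E : Type*) [LinearOrder E] where
  op : E → E → E
  bot : E
  top : E
  bot_le : ∀ a : E, bot ≤ a
  le_top : ∀ a : E, a ≤ top
  comm : ∀ a b : E, op a b = op b a
  assoc : ∀ a b c : E, op (op a b) c = op a (op b c)
  iden : ∀ a : E, op a bot = a
  mono : ∀ a b c : E, b ≤ a → op b c ≤ op a c
  absorb : ∀ a : E, op a top = top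
  sub : E → E → E
  sub_add : ∀ a b : E, a ≤ b → op (sub b a) a = b
  sub_max : ∀ a b g : E, a ≤ b → op g a = b → g ≤ sub b a

/-!
Write `γ = β ⊖ α`, so that `γ ⊕ α = β`. Absorption of `α` gives
`α ⊕ β = γ ⊕ (α ⊕ α) = γ ⊕ α = β`, so `β` itself is a difference of `β` and `α`, whence
`β ≼ β ⊖ α` by maximality; conversely `β ⊖ α ≼ (β ⊖ α) ⊕ α = β` since `⊕` is extensive.
-/

namespace FairVS

variable {E : Type*} [LinearOrder E] (S : FairVS E)

theorem le_op (a b : E) : a ≤ S.op a b :=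
  calc a = S.op S.bot a := by rw [S.comm, S.iden]
    _ ≤ S.op b a := S.mono _ _ _ (S.bot_le b)
    _ = S.op a b := S.comm _ _

theorem sub_le {a b : E} (h : a ≤ b) : S.sub b a ≤ b :=
  (S.le_op _ a).trans_eq (S.sub_add a b h)

theorem op_eq_right_of_op_self {a b : E} (habs : S.op a a = a) (h : a ≤ b) : S.op a b = b :=
  calc S.op a b = S.op a (S.op (S.sub b a) a) := by rw [S.sub_add a b h]
    _ = S.op (S.sub b a) (S.op a a) := by rw [S.comm a, S.assoc]
    _ = b := by rw [habs, S.sub_add a b h]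

theorem sub_eq_self_of_op_self {a b : E} (habs : S.op a a = a) (h : a ≤ b) : S.sub b a = b :=
  le_antisymm (S.sub_le h) <|
    S.sub_max a b b h (by rw [S.comm]; exact S.op_eq_right_of_op_self habs h)

end FairVS

theorem stmt4 {E : Type*} [LinearOrder E] (S : FairVS E) (α β : E)
    (habs : S.op α α = α) (h : α ≤ β) :
    S.op α β = β ∧ S.sub β α = β :=
  ⟨S.op_eq_right_of_op_self habs h, S.sub_eq_self_of_op_self habs h⟩
end

section
/- In a fair valuation structure, for every valuation α, the element α ⊖ α is the maximal absorbing valuation less than or equal to α; in particular α ⊖ α is absorbing, α ⊖ α ≼ α, and every absorbing element γ ≼ α satisfies γ ≼ α ⊖ α. -/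
/-! `α ⊖ α` is the largest `γ` with `γ ⊕ α = α`. These `γ` are closed under `⊕`, which makes
`α ⊖ α` absorbing, and an absorbing `γ ≼ α` is one of them, since
`γ ⊕ α = γ ⊕ γ ⊕ (α ⊖ γ) = γ ⊕ (α ⊖ γ) = α`. -/

namespace FairVS

variable {E : Type*} [LinearOrder E] (S : FairVS E)

theorem le_op_self (a b : E) : a ≤ S.op b a := by
  simpa only [S.comm S.bot a, S.iden] using S.mono b S.bot a (S.bot_le b)

theorem sub_self_op (a : E) : S.op (S.sub a a) a = a :=
  S.sub_add a a le_rfl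

theorem le_sub_self_of_op_eq {a g : E} (h : S.op g a = a) : g ≤ S.sub a a :=
  S.sub_max a a g le_rfl h

theorem sub_self_le (a : E) : S.sub a a ≤ a :=
  (S.le_op_self _ _).trans_eq (S.comm a _ ▸ S.sub_self_op a)

theorem sub_self_op_sub_self (a : E) : S.op (S.sub a a) (S.sub a a) = S.sub a a := by
  refine le_antisymm (S.le_sub_self_of_op_eq ?_) (S.le_op_self _ _)
  rw [S.assoc, S.sub_self_op, S.sub_self_op]

theorem op_eq_right_of_op_self_s6 {g a : E} (hg : S.op g g = g) (hga : g ≤ a) :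
    S.op g a = a := by
  have h := S.sub_add g a hga
  calc S.op g a = S.op (S.sub a g) (S.op g g) := by
        rw [← S.assoc, h, S.comm]
    _ = a := by rw [hg, h]

end FairVS

theorem stmt6 {E : Type*} [LinearOrder E] (S : FairVS E) (α : E) :
    S.op (S.sub α α) (S.sub α α) = S.sub α α ∧
    S.sub α α ≤ α ∧
    ∀ γ : E, S.op γ γ = γ → γ ≤ α → γ ≤ S.sub α α :=
  ⟨S.sub_self_op_sub_self α, S.sub_self_le α,
    fun _ hγ hγα => S.le_sub_self_of_op_eq (S.op_eq_right_of_op_self_s6 hγ hγα)⟩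
end

section
/- In a valuation structure with at least three distinct elements (|E| > 2), the operation ⊕ cannot be both idempotent and strictly monotonic. -/
/-!
If `u < v` with `v ≠ ⊤`, put `w = u ⊕ v`. Strict monotonicity and idempotence give
`w < v ⊕ v = v`, so `w ≠ ⊤`; but idempotence also gives `u ⊕ w = w = v ⊕ w`, contradicting
strict monotonicity applied to `u < v` and `w`. Hence all elements other than `⊤` coincide,
which three distinct elements rule out.
-/

structure ValStruct (E : Type*) [LinearOrder E] where
  op : E → E → E
  bot : E
  top : E
  bot_le : ∀ a : E, bot ≤ a
  le_top : ∀ a : E, a ≤ top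
  comm : ∀ a b : E, op a b = op b a
  assoc : ∀ a b c : E, op (op a b) c = op a (op b c)
  iden : ∀ a : E, op a bot = a
  mono : ∀ a b c : E, b ≤ a → op b c ≤ op a c
  absorb : ∀ a : E, op a top = top

namespace ValStruct

variable {E : Type*} [LinearOrder E] (S : ValStruct E)

def Idempotent : Prop := ∀ α : E, S.op α α = α

def StrictlyMonotonic : Prop :=
  ∀ α β γ : E, β < α → γ ≠ S.top → S.op β γ < S.op α γ

variable {S}

theorem op_left_idem (hidem : S.Idempotent) (u v : E) : S.op u (S.op u v) = S.op u v := by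
  rw [← S.assoc, hidem u]

theorem op_lt_of_lt (hidem : S.Idempotent) (hsm : S.StrictlyMonotonic) {u v : E} (huv : u < v)
    (hv : v ≠ S.top) : S.op u v < v := by
  simpa only [hidem v] using hsm v u v huv hv

theorem not_lt_of_ne_top (hidem : S.Idempotent) (hsm : S.StrictlyMonotonic) {u v : E}
    (hv : v ≠ S.top) : ¬u < v := by
  intro huv
  have hw : S.op u v ≠ S.top := ((op_lt_of_lt hidem hsm huv hv).trans_le (S.le_top v)).ne
  have hlt := hsm v u (S.op u v) huv hw
  rw [op_left_idem hidem, S.comm u v, op_left_idem hidem] at hlt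
  exact hlt.false

theorem eq_of_ne_top (hidem : S.Idempotent) (hsm : S.StrictlyMonotonic) {u v : E}
    (hu : u ≠ S.top) (hv : v ≠ S.top) : u = v :=
  le_antisymm (not_lt.1 (not_lt_of_ne_top hidem hsm hu))
    (not_lt.1 (not_lt_of_ne_top hidem hsm hv))

end ValStruct

theorem stmt11 {E : Type*} [LinearOrder E] (S : ValStruct E)
    (a b c : E) (hab : a ≠ b) (hac : a ≠ c) (hbc : b ≠ c)
    (hidem : ∀ α : E, S.op α α = α)
    (hsm : ∀ α β γ : E, β < α → γ ≠ S.top → S.op β γ < S.op α γ) :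
    False := by
  have eq_of_ne_top : ∀ {u v : E}, u ≠ S.top → v ≠ S.top → u = v :=
    ValStruct.eq_of_ne_top hidem hsm
  rcases eq_or_ne a S.top with rfl | ha
  · exact hbc (eq_of_ne_top hab.symm hac.symm)
  rcases eq_or_ne b S.top with rfl | hb
  · exact hac (eq_of_ne_top ha hbc.symm)
  · exact hab (eq_of_ne_top ha hb)
end

section
/- Let V be a binary VCSP over a fair valuation structure whose constraint graph is a tree T, directional arc consistent with respect to a topological ordering of T rooted at variable 1. Then for every value a in the domain of variable 1, c₁(a) equals the minimum, over all complete assignments t with t(1) = a, of the total valuation of t. -/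
namespace FairVS

variable {E : Type*} [LinearOrder E] (S : FairVS E)

abbrev toCommMonoid : CommMonoid E where
  mul := S.op
  one := S.bot
  mul_assoc := S.assoc
  one_mul a := (S.comm _ a).trans (S.iden a)
  mul_one := S.iden
  mul_comm := S.comm

theorem isOrderedMonoid :
    letI := S.toCommMonoid
    IsOrderedMonoid E :=
  letI := S.toCommMonoid
  { mul_le_mul_left := fun a b h c => S.mono b a c h }

end FairVS

theorem List.foldr_mul_eq_prod_mul {M : Type*} [Monoid M] (l : List M) (b : M) :
    l.foldr (· * ·) b = l.prod * b := by
  induction l <;> simp [*, mul_assoc]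

theorem Finset.prod_filter_finRange {M : Type*} [CommMonoid M] {n : ℕ} (p : Fin n → Prop)
    [DecidablePred p] (f : Fin n → M) :
    ∏ i with p i, f i = (((List.finRange n).filter p).map f).prod :=
  rfl

section TreeVCSP

variable {M : Type*} [CommMonoid M] {n : ℕ} (hn : 0 < n) {d : Fin n → Type*}
  {parent : Fin n → Fin n} (c : ∀ i, d i → M) (cb : ∀ i, d (parent i) → d i → M)

def localCost (t : ∀ i, d i) (i : Fin n) : M :=
  c i (t i) * if i = ⟨0, hn⟩ then 1 else cb i (t (parent i)) (t i)

theorem foldr_finRange_eq_prod_localCost (t : ∀ i, d i) :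
    ((List.finRange n).map fun i => c i (t i)).foldr (· * ·)
        ((((List.finRange n).filter fun i => i ≠ ⟨0, hn⟩).map
          fun i => cb i (t (parent i)) (t i)).foldr (· * ·) 1) =
      ∏ i, localCost hn c cb t i := by
  rw [List.foldr_mul_eq_prod_mul, ← List.prod_eq_foldr, ← Fin.prod_univ_def,
    ← Finset.prod_filter_finRange, Finset.prod_filter, ← Finset.prod_mul_distrib]
  simp only [localCost, ite_not]

def prefixCost (t : ∀ i, d i) (m : ℕ) : M :=
  ∏ i with i.val < m, localCost hn c cb t i

variable {hn c cb} {t : ∀ i, d i}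

theorem prefixCost_one : prefixCost hn c cb t 1 = c ⟨0, hn⟩ (t ⟨0, hn⟩) := by
  have : (Finset.univ.filter fun i : Fin n => i.val < 1) = {⟨0, hn⟩} := by
    ext i; simp [Fin.ext_iff]
  rw [prefixCost, this, Finset.prod_singleton, localCost, if_pos rfl, mul_one]

theorem prefixCost_self : prefixCost hn c cb t n = ∏ i, localCost hn c cb t i := by
  simp [prefixCost]

theorem prefixCost_succ {m : ℕ} (hm : m < n) :
    prefixCost hn c cb t (m + 1) = prefixCost hn c cb t m * localCost hn c cb t ⟨m, hm⟩ := by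
  have : (Finset.univ.filter fun i : Fin n => i.val < m + 1) =
      insert ⟨m, hm⟩ (Finset.univ.filter fun i : Fin n => i.val < m) := by
    ext i; simp [Fin.ext_iff]; omega
  rw [prefixCost, this, Finset.prod_insert (by simp), mul_comm, prefixCost]

theorem exists_prefixCost_eq_mul {m : ℕ} {i : Fin n} (hi : i.val < m) :
    ∃ r, prefixCost hn c cb t m = c i (t i) * r := by
  rw [prefixCost, ← Finset.mul_prod_erase _ _ (by simpa using hi), localCost, mul_assoc]
  exact ⟨_, rfl⟩

def extendFromRoot (hpar : ∀ i : Fin n, i ≠ ⟨0, hn⟩ → parent i < i) (a : d ⟨0, hn⟩)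
    (ch : ∀ i, i ≠ ⟨0, hn⟩ → d (parent i) → d i) (i : Fin n) : d i :=
  if h : i = ⟨0, hn⟩ then h ▸ a else ch i h (extendFromRoot hpar a ch (parent i))
termination_by i.val
decreasing_by exact hpar i h

variable (hpar : ∀ i : Fin n, i ≠ ⟨0, hn⟩ → parent i < i)
include hpar

theorem extendFromRoot_root (a : d ⟨0, hn⟩) (ch : ∀ i, i ≠ ⟨0, hn⟩ → d (parent i) → d i) :
    extendFromRoot hpar a ch ⟨0, hn⟩ = a := by
  rw [extendFromRoot, dif_pos rfl]

theorem extendFromRoot_of_ne (a : d ⟨0, hn⟩) (ch : ∀ i, i ≠ ⟨0, hn⟩ → d (parent i) → d i)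
    {i : Fin n} (hi : i ≠ ⟨0, hn⟩) :
    extendFromRoot hpar a ch i = ch i hi (extendFromRoot hpar a ch (parent i)) := by
  rw [extendFromRoot, dif_neg hi]

theorem exists_prefixCost_succ {i : Fin n} (hi : i ≠ ⟨0, hn⟩) :
    ∃ r, prefixCost hn c cb t i = c (parent i) (t (parent i)) * r ∧
      prefixCost hn c cb t (i + 1) =
        c (parent i) (t (parent i)) * cb i (t (parent i)) (t i) * c i (t i) * r := by
  obtain ⟨r, hr⟩ := exists_prefixCost_eq_mul (c := c) (cb := cb) (t := t) (hpar i hi)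
  refine ⟨r, hr, ?_⟩
  rw [prefixCost_succ i.isLt, Fin.eta, hr, localCost, if_neg hi]
  ac_rfl

theorem root_cost_le_prefixCost [Preorder M] [IsOrderedMonoid M]
    (hle : ∀ i, i ≠ ⟨0, hn⟩ → c (parent i) (t (parent i)) ≤
      c (parent i) (t (parent i)) * cb i (t (parent i)) (t i) * c i (t i))
    {m : ℕ} (hm : 0 < m) (hmn : m ≤ n) : c ⟨0, hn⟩ (t ⟨0, hn⟩) ≤ prefixCost hn c cb t m := by
  induction m, hm using Nat.le_induction with
  | base => rw [prefixCost_one]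
  | succ m hm ih =>
    have hi : (⟨m, hmn⟩ : Fin n) ≠ ⟨0, hn⟩ := by simp [Fin.ext_iff]; omega
    obtain ⟨r, hr, hr'⟩ := exists_prefixCost_succ hpar (c := c) (cb := cb) (t := t) hi
    calc c ⟨0, hn⟩ (t ⟨0, hn⟩) ≤ prefixCost hn c cb t m := ih (by omega)
      _ = _ := hr
      _ ≤ _ := mul_le_mul_left (hle _ hi) r
      _ = prefixCost hn c cb t (m + 1) := hr'.symm

theorem prefixCost_eq_root_cost
    (heq : ∀ i, i ≠ ⟨0, hn⟩ →
      c (parent i) (t (parent i)) * cb i (t (parent i)) (t i) * c i (t i) =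
        c (parent i) (t (parent i)))
    {m : ℕ} (hm : 0 < m) (hmn : m ≤ n) : prefixCost hn c cb t m = c ⟨0, hn⟩ (t ⟨0, hn⟩) := by
  induction m, hm using Nat.le_induction with
  | base => rw [prefixCost_one]
  | succ m hm ih =>
    have hi : (⟨m, hmn⟩ : Fin n) ≠ ⟨0, hn⟩ := by simp [Fin.ext_iff]; omega
    obtain ⟨r, hr, hr'⟩ := exists_prefixCost_succ hpar (c := c) (cb := cb) (t := t) hi
    rw [hr', heq _ hi, ← hr, ih (by omega)]

theorem isLeast_prod_localCost [Preorder M] [IsOrderedMonoid M]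
    (hdac : ∀ i, i ≠ ⟨0, hn⟩ → ∀ a : d (parent i),
      IsLeast {v | ∃ b, v = c (parent i) a * cb i a b * c i b} (c (parent i) a))
    (a : d ⟨0, hn⟩) :
    IsLeast {v | ∃ t : ∀ i, d i, t ⟨0, hn⟩ = a ∧ ∏ i, localCost hn c cb t i = v}
      (c ⟨0, hn⟩ a) := by
  refine ⟨?_, ?_⟩
  · choose ch hch using fun i hi b => (hdac i hi b).1
    refine ⟨extendFromRoot hpar a ch, extendFromRoot_root hpar a ch, ?_⟩
    rw [← prefixCost_self, prefixCost_eq_root_cost hpar _ hn le_rfl, extendFromRoot_root]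
    intro i hi
    rw [extendFromRoot_of_ne hpar a ch hi]
    exact (hch i hi _).symm
  · rintro v ⟨t, rfl, rfl⟩
    rw [← prefixCost_self]
    exact root_cost_le_prefixCost hpar (fun i hi => (hdac i hi _).2 ⟨t i, rfl⟩) hn le_rfl

end TreeVCSP

theorem stmt17_general {E : Type*} [LinearOrder E] (S : FairVS E)
    (n : ℕ) (hn : 0 < n)
    (d : Fin n → Type)
    (parent : Fin n → Fin n)
    (hpar : ∀ i : Fin n, i ≠ ⟨0, hn⟩ → parent i < i)
    (c : ∀ i, d i → E)
    (cb : ∀ i : Fin n, d (parent i) → d i → E)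
    (val : (∀ i, d i) → E)
    (hval : ∀ t, val t =
      ((List.finRange n).map (fun i => c i (t i))).foldr S.op
        ((((List.finRange n).filter (fun i => i ≠ ⟨0, hn⟩)).map
          (fun i => cb i (t (parent i)) (t i))).foldr S.op S.bot))
    (hdac : ∀ i : Fin n, i ≠ ⟨0, hn⟩ → ∀ a : d (parent i),
      IsLeast { v : E | ∃ b : d i,
          v = S.op (S.op (c (parent i) a) (cb i a b)) (c i b) }
        (c (parent i) a)) :
    ∀ a : d ⟨0, hn⟩,
      IsLeast { v : E | ∃ t : ∀ i, d i, t ⟨0, hn⟩ = a ∧ val t = v }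
        (c ⟨0, hn⟩ a) := by
  let := S.toCommMonoid
  have := S.isOrderedMonoid
  have hval' : ∀ t, val t = ∏ i, localCost hn c cb t i :=
    fun t => (hval t).trans (foldr_finRange_eq_prod_localCost hn c cb t)
  intro a
  simpa only [hval'] using isLeast_prod_localCost hpar hdac a

/-- Directional arc consistency solves tree-structured binary VCSPs:
the unary cost of the root gives the optimal valuation for each root value. -/
theorem stmt17 {E : Type*} [LinearOrder E] (S : FairVS E)
    (n : ℕ) (hn : 0 < n)
    (d : Fin n → Type) [∀ i, Fintype (d i)] [∀ i, Nonempty (d i)]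
    (parent : Fin n → Fin n)
    (hroot : parent ⟨0, hn⟩ = ⟨0, hn⟩)
    (hpar : ∀ i : Fin n, i ≠ ⟨0, hn⟩ → parent i < i)
    (c : ∀ i, d i → E)
    (cb : ∀ i : Fin n, d (parent i) → d i → E)
    (val : (∀ i, d i) → E)
    (hval : ∀ t, val t =
      ((List.finRange n).map (fun i => c i (t i))).foldr S.op
        ((((List.finRange n).filter (fun i => i ≠ ⟨0, hn⟩)).map
          (fun i => cb i (t (parent i)) (t i))).foldr S.op S.bot))
    (hdac : ∀ i : Fin n, i ≠ ⟨0, hn⟩ → ∀ a : d (parent i),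
      IsLeast { v : E | ∃ b : d i,
          v = S.op (S.op (c (parent i) a) (cb i a b)) (c i b) }
        (c (parent i) a)) :
    ∀ a : d ⟨0, hn⟩,
      IsLeast { v : E | ∃ t : ∀ i, d i, t ⟨0, hn⟩ = a ∧ val t = v }
        (c ⟨0, hn⟩ a) :=
  stmt17_general S n hn d parent hpar c cb val hval hdac
end
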